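/- arXiv:2403.17715 — 4 statements merged into one kernel-verified Lean document; each statement's English description precedes it below -/
import Mathlib

section
/- Let T be a tree on n ≥ 2 vertices, v a vertex of T, and λ a real number that is an eigenvalue of both T and T - v. Then there exists a vertex w of T such that m(T - w, λ) = m(T, λ) + 1. -/
open scoped Classical

/-- Multiplicity of `lam` as an eigenvalue of a real symmetric matrix:
dimension of the kernel of `A - lam • 1`. -/
noncomputable def matMult {V : Type*} [Fintype V] [DecidableEq V]
    (A : Matrix V V ℝ) (lam : ℝ) : ℕ :=
  Module.finrank ℝ (LinearMap.ker (Matrix.toLin' (A - lam • (1 : Matrix V V ℝ))))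

/-- Adjacency matrix of a simple graph over ℝ. -/
noncomputable def adjM {V : Type*} [Fintype V] (G : SimpleGraph V) : Matrix V V ℝ :=
  fun i j => if G.Adj i j then 1 else 0

/-- Multiplicity of `lam` as an eigenvalue of the adjacency matrix of `G`. -/
noncomputable def gMult {V : Type*} [Fintype V] (G : SimpleGraph V) (lam : ℝ) : ℕ :=
  matMult (adjM G) lam

/-- Multiplicity of `lam` as an eigenvalue of the induced subgraph of `G` on `s`. -/
noncomputable def sMult {V : Type*} [Fintype V] (G : SimpleGraph V) (s : Set V) (lam : ℝ) : ℕ :=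
  gMult (G.induce s) lam

/-- Degree of a vertex, via the cardinality of its neighbor set. -/
noncomputable def deg {V : Type*} (G : SimpleGraph V) (v : V) : ℕ :=
  (G.neighborSet v).ncard

/-- Number of pendant (degree-1) vertices. -/
noncomputable def pendCount {V : Type*} (G : SimpleGraph V) : ℕ :=
  {v : V | deg G v = 1}.ncard

/-- Number of pendant vertices, with the paper's convention that a
single-vertex graph has `p = 2`. -/
noncomputable def pendCount' {V : Type*} (G : SimpleGraph V) : ℕ :=
  if Nat.card V ≤ 1 then 2 else pendCount G

/-- A graph is (isomorphic to) a path graph. -/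
def IsPathGraph {W : Type*} (H : SimpleGraph W) : Prop :=
  ∃ n : ℕ, Nonempty (H ≃g SimpleGraph.pathGraph n)

/-- The vertex sets (as subsets of `V`) of the connected components of `G - w`. -/
def compSupp {V : Type*} (G : SimpleGraph V) (w : V)
    (c : (G.induce {u | u ≠ w}).ConnectedComponent) : Set V :=
  Subtype.val '' c.supp

/-!
For a symmetric matrix `M`, write `K(s)` for the null space of the principal submatrix `M[s]`,
extended by zero; for `M = A(T) - λ • 1` its dimension is `m(T[s], λ)`.

If some `y ∈ K(V ∖ u)` has `(M y)_u ≠ 0`, then `(M y)_u x_u = ⟪M y, x⟫ = ⟪y, M x⟫ = 0` for every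
`x ∈ ker M`, so `ker M ⊆ K(V ∖ u)`; there it is the kernel of the nonzero functional
`x ↦ (M x)_u`, and the nullity drops by exactly one when `u` is put back.

When the graph of `M` is a tree `T`, such a pair `(u, y)` exists as soon as some `K(V ∖ v)` is
nonzero. Among all components `C` of all `T - w` carrying a nonzero `y ∈ K(C)`, take `C` of
minimal size and let `r` be the unique neighbour of `w` in `C`. If `y_r = 0`, then `y` restricted
to the component of `T - r` through a vertex where `y ≠ 0` lies in `C ∖ {r}` and is a smaller
example. Hence `y_r ≠ 0`, and `(M y)_w = M_{wr} y_r ≠ 0`.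
-/

namespace SimpleGraph

variable {V : Type*} {G : SimpleGraph V} {w : V} {c : (G.induce {u | u ≠ w}).ConnectedComponent}

theorem ne_of_mem_compSupp {t : V} (ht : t ∈ compSupp G w c) : t ≠ w := by
  obtain ⟨a, _, rfl⟩ := ht
  exact a.2

theorem mem_compSupp_of_adj {t t' : V} (ht : t ∈ compSupp G w c) (hadj : G.Adj t t')
    (ht' : t' ≠ w) : t' ∈ compSupp G w c := by
  obtain ⟨a, ha, rfl⟩ := ht
  exact ⟨⟨t', ht'⟩, c.mem_supp_of_adj_mem_supp ha (by exact hadj), rfl⟩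

theorem compSupp_connectedComponentMk_subset {s : Set V}
    (hs : ∀ t ∈ s, ∀ t', G.Adj t t' → t' ≠ w → t' ∈ s) {t₀ : V} (h₀ : t₀ ∈ s) (h₀w : t₀ ≠ w) :
    compSupp G w ((G.induce {u | u ≠ w}).connectedComponentMk ⟨t₀, h₀w⟩) ⊆ s := by
  suffices ∀ a b : {u // u ≠ w}, (G.induce {u | u ≠ w}).Walk a b → a.1 ∈ s → b.1 ∈ s by
    rintro _ ⟨b, hb, rfl⟩
    exact this _ _ (ConnectedComponent.exact hb).some.reverse h₀
  intro a b p ha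
  induction p with
  | nil => exact ha
  | @cons _ y _ h _ ih => exact ih (hs _ ha _ h y.2)

theorem exists_adj_mem_compSupp (hG : G.Preconnected) {t : V} (ht : t ∈ compSupp G w c) :
    ∃ r ∈ compSupp G w c, G.Adj w r := by
  suffices ∀ a b, G.Walk a b → a ∈ compSupp G w c → b = w → ∃ r ∈ compSupp G w c, G.Adj w r from
    this t w (hG t w).some ht rfl
  intro a b p ha hb
  induction p with
  | nil => exact absurd hb (ne_of_mem_compSupp ha)
  | @cons a m _ hadj _ ih =>
    by_cases hm : m = w
    · exact ⟨a, ha, hm ▸ hadj.symm⟩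
    · exact ih (mem_compSupp_of_adj ha hadj hm) hb

theorem IsAcyclic.eq_of_adj_of_mem_compSupp (hG : G.IsAcyclic) {r r' : V}
    (hr : r ∈ compSupp G w c) (hr' : r' ∈ compSupp G w c) (hwr : G.Adj w r) (hwr' : G.Adj w r') :
    r' = r := by
  obtain ⟨a, ha, rfl⟩ := hr
  obtain ⟨a', ha', rfl⟩ := hr'
  obtain ⟨q⟩ := ConnectedComponent.exact (ha.trans ha'.symm)
  let f := (Embedding.induce (G := G) {u | u ≠ w}).toHom
  have hwq : w ∉ (q.toPath.1.map f).support := by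
    rw [Walk.support_map]
    simp [f]
  obtain ⟨p, hp, hwp⟩ : ∃ p : G.Walk a a', p.IsPath ∧ w ∉ p.support :=
    ⟨_, q.toPath.2.map Subtype.val_injective, hwq⟩
  exact (hG.eq_snd_of_adj_start (hp.cons hwp (h := hwr)) hwr' (by simp)).trans (Walk.snd_cons _ _)

end SimpleGraph

namespace Matrix

open SimpleGraph

variable {V R : Type*} [Fintype V] [Field R]

/-- The null space of the principal submatrix `M[s]`, extended by zero. -/
def kerOn (M : Matrix V V R) (s : Set V) : Submodule R (V → R) :=
  Submodule.pi sᶜ (fun _ => ⊥) ⊓ (Submodule.pi s fun _ => ⊥).comap M.mulVecLin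

variable {M : Matrix V V R} {s C : Set V} {x : V → R}

theorem mem_kerOn : x ∈ M.kerOn s ↔ (∀ t ∉ s, x t = 0) ∧ ∀ t ∈ s, (M *ᵥ x) t = 0 := by
  simp only [kerOn, Submodule.mem_inf, Submodule.mem_pi, Submodule.mem_bot, Submodule.mem_comap,
    mulVecLin_apply, Set.mem_compl_iff]

theorem submatrix_mulVec_comp_val_apply [Fintype s] (hx : ∀ t ∉ s, x t = 0)
    (a : s) : (M.submatrix ((↑) : s → V) (↑) *ᵥ (x ∘ ((↑) : s → V))) a = (M *ᵥ x) a := by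
  simp only [mulVec, dotProduct, submatrix_apply, Function.comp_apply]
  rw [← Finset.sum_subtype s.toFinset (fun _ => Set.mem_toFinset) fun t => M a t * x t]
  exact Finset.sum_subset (Finset.subset_univ _) fun t _ ht => by
    rw [hx t (by simpa using ht), mul_zero]

theorem finrank_ker_submatrix_mulVecLin [Fintype s] :
    Module.finrank R (LinearMap.ker (M.submatrix ((↑) : s → V) ((↑) : s → V)).mulVecLin) =
      Module.finrank R (M.kerOn s) := by
  have hmaps : ∀ x ∈ M.kerOn s, LinearMap.funLeft R R ((↑) : s → V) x ∈
      LinearMap.ker (M.submatrix ((↑) : s → V) ((↑) : s → V)).mulVecLin := fun x hx => by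
    rw [mem_kerOn] at hx
    ext a
    rw [mulVecLin_apply, LinearMap.funLeft, LinearMap.coe_mk, AddHom.coe_mk,
      submatrix_mulVec_comp_val_apply hx.1, hx.2 a a.2, Pi.zero_apply]
  refine (LinearEquiv.ofBijective ((LinearMap.funLeft R R _).restrict hmaps)
    ⟨(injective_iff_map_eq_zero _).mpr ?_, ?_⟩).finrank_eq.symm
  · rintro ⟨x, hx⟩ h
    ext t
    by_cases ht : t ∈ s
    · exact congrFun (congrArg Subtype.val h) ⟨t, ht⟩
    · exact (mem_kerOn.mp hx).1 t ht
  · rintro ⟨z, hz⟩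
    have hx0 : ∀ t ∉ s, Function.extend ((↑) : s → V) z 0 t = 0 := fun t ht =>
      Function.extend_apply' _ _ _ fun ⟨a, ha⟩ => ht (ha ▸ a.2)
    have hxz : Function.extend ((↑) : s → V) z 0 ∘ ((↑) : s → V) = z :=
      Function.extend_comp Subtype.val_injective _ _
    refine ⟨⟨_, mem_kerOn.mpr ⟨hx0, fun t ht => ?_⟩⟩, Subtype.ext hxz⟩
    rw [← submatrix_mulVec_comp_val_apply hx0 ⟨t, ht⟩, hxz]
    exact congrFun (LinearMap.mem_ker.mp hz) ⟨t, ht⟩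

theorem IsSymm.mulVec_apply_mul_apply_eq_zero (hM : M.IsSymm) {u : V} {y : V → R}
    (hx : M *ᵥ x = 0) (hy : ∀ t ≠ u, (M *ᵥ y) t = 0) : (M *ᵥ y) u * x u = 0 := by
  calc (M *ᵥ y) u * x u = (M *ᵥ y) ⬝ᵥ x := by
        rw [dotProduct, Fintype.sum_eq_single u fun t ht => by rw [hy t ht, zero_mul]]
    _ = 0 := by
        rw [dotProduct_comm, dotProduct_mulVec, ← hM.eq, vecMul_transpose, hx, zero_dotProduct]

theorem IsSymm.ker_mulVecLin_le_kerOn_compl_singleton (hM : M.IsSymm) {u : V} {y : V → R}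
    (hy : y ∈ M.kerOn {u}ᶜ) (hyu : (M *ᵥ y) u ≠ 0) : LinearMap.ker M.mulVecLin ≤ M.kerOn {u}ᶜ := by
  intro x hx
  rw [LinearMap.mem_ker, mulVecLin_apply] at hx
  have hxu : x u = 0 := (mul_eq_zero.mp <| hM.mulVec_apply_mul_apply_eq_zero hx
    fun t ht => (mem_kerOn.mp hy).2 t ht).resolve_left hyu
  refine mem_kerOn.mpr ⟨fun t ht => ?_, fun t _ => by rw [hx, Pi.zero_apply]⟩
  obtain rfl : t = u := by simpa using ht
  exact hxu

theorem IsSymm.finrank_kerOn_compl_singleton (hM : M.IsSymm) {u : V} {y : V → R}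
    (hy : y ∈ M.kerOn {u}ᶜ) (hyu : (M *ᵥ y) u ≠ 0) :
    Module.finrank R (M.kerOn {u}ᶜ) = Module.finrank R (LinearMap.ker M.mulVecLin) + 1 := by
  set K := M.kerOn {u}ᶜ
  let φ : K →ₗ[R] R := (LinearMap.proj u ∘ₗ M.mulVecLin) ∘ₗ K.subtype
  have hφ : Function.Surjective φ := fun c =>
    ⟨(c / (M *ᵥ y) u) • ⟨y, hy⟩, by simp [φ, div_mul_cancel₀ c hyu]⟩
  have hker : LinearMap.ker φ = (LinearMap.ker M.mulVecLin).comap K.subtype := by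
    ext ⟨x, hx⟩
    simp only [LinearMap.mem_ker, Submodule.mem_comap, K.subtype_apply, mulVecLin_apply, φ,
      LinearMap.comp_apply, LinearMap.proj_apply, funext_iff, Pi.zero_apply]
    refine ⟨fun h t => ?_, fun h => h u⟩
    by_cases ht : t = u
    · exact ht ▸ h
    · exact (mem_kerOn.mp hx).2 t ht
  have := LinearMap.finrank_range_add_finrank_ker φ
  rw [LinearMap.range_eq_top.mpr hφ, finrank_top, Module.finrank_self, hker,
    (Submodule.comapSubtypeEquivOfLe (hM.ker_mulVecLin_le_kerOn_compl_singleton hy hyu)).finrank_eq]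
    at this
  omega

variable {T : SimpleGraph V}

theorem mulVec_apply_congr_adj (hMT : ∀ i j, M i j ≠ 0 → i = j ∨ T.Adj i j) {y : V → R} {t : V}
    (ht : x t = y t) (hadj : ∀ t', T.Adj t t' → x t' = y t') : (M *ᵥ x) t = (M *ᵥ y) t := by
  refine Finset.sum_congr rfl fun t' _ => ?_
  by_cases h : M t t' = 0
  · simp [h]
  · rcases hMT t t' h with rfl | h'
    · rw [ht]
    · rw [hadj t' h']

theorem indicator_mem_kerOn (hMT : ∀ i j, M i j ≠ 0 → i = j ∨ T.Adj i j)
    (hx : x ∈ M.kerOn s) (hCs : C ⊆ s) (hsep : ∀ a ∈ C, ∀ b ∈ s, T.Adj a b → b ∈ C) :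
    C.indicator x ∈ M.kerOn C := by
  rw [mem_kerOn] at hx ⊢
  refine ⟨fun t ht => Set.indicator_of_notMem ht x, fun t ht => ?_⟩
  rw [← hx.2 t (hCs ht)]
  refine mulVec_apply_congr_adj hMT (Set.indicator_of_mem ht x) fun t' hadj => ?_
  by_cases ht' : t' ∈ C
  · exact Set.indicator_of_mem ht' x
  · rw [Set.indicator_of_notMem ht', hx.1 t' fun h => ht' (hsep t ht t' h hadj)]

theorem mem_kerOn_of_subset (hMT : ∀ i j, M i j ≠ 0 → i = j ∨ T.Adj i j)
    (hx : x ∈ M.kerOn C) (hCs : C ⊆ s) (hsep : ∀ a ∈ C, ∀ b ∈ s, T.Adj a b → b ∈ C) :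
    x ∈ M.kerOn s := by
  rw [mem_kerOn] at hx ⊢
  refine ⟨fun t ht => hx.1 t fun h => ht (hCs h), fun t ht => ?_⟩
  by_cases htC : t ∈ C
  · exact hx.2 t htC
  · rw [mulVec_apply_congr_adj (y := 0) hMT (hx.1 t htC)
      fun t' hadj => hx.1 t' fun h => htC (hsep t' h t ht hadj.symm), mulVec_zero, Pi.zero_apply]

variable {w : V} {c : (T.induce {u | u ≠ w}).ConnectedComponent}

theorem exists_indicator_compSupp_mem_kerOn (hMT : ∀ i j, M i j ≠ 0 → i = j ∨ T.Adj i j)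
    (hx : x ∈ M.kerOn s) (hws : w ∉ s) (hs : ∀ t ∈ s, ∀ t', T.Adj t t' → t' ≠ w → t' ∈ s)
    {t₀ : V} (hx₀ : x t₀ ≠ 0) :
    ∃ c, compSupp T w c ⊆ s ∧ (compSupp T w c).indicator x ∈ M.kerOn (compSupp T w c) ∧
      (compSupp T w c).indicator x ≠ 0 := by
  have ht₀ : t₀ ∈ s := by_contra fun h => hx₀ ((mem_kerOn.mp hx).1 t₀ h)
  have ht₀w : t₀ ≠ w := fun h => hws (h ▸ ht₀)
  set c := (T.induce {u | u ≠ w}).connectedComponentMk ⟨t₀, ht₀w⟩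
  have hCs : compSupp T w c ⊆ s := compSupp_connectedComponentMk_subset hs ht₀ ht₀w
  have ht₀C : t₀ ∈ compSupp T w c := ⟨_, ConnectedComponent.connectedComponentMk_mem, rfl⟩
  refine ⟨c, hCs, indicator_mem_kerOn hMT hx hCs fun a ha b hb hab => ?_, fun h => ?_⟩
  · exact mem_compSupp_of_adj ha hab fun h => hws (h ▸ hb)
  · exact hx₀ (by simpa [Set.indicator_of_mem ht₀C] using congrFun h t₀)

theorem kerOn_compSupp_le (hMT : ∀ i j, M i j ≠ 0 → i = j ∨ T.Adj i j) :
    M.kerOn (compSupp T w c) ≤ M.kerOn {w}ᶜ := fun _ hx =>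
  mem_kerOn_of_subset hMT hx (fun _ => ne_of_mem_compSupp) fun _ ha _ hb hab =>
    mem_compSupp_of_adj ha hab hb

theorem mulVec_apply_eq_of_mem_kerOn_compSupp (hMT : ∀ i j, M i j ≠ 0 → i = j ∨ T.Adj i j)
    (hT : T.IsAcyclic) {r : V} (hr : r ∈ compSupp T w c) (hwr : T.Adj w r) {y : V → R}
    (hy : y ∈ M.kerOn (compSupp T w c)) : (M *ᵥ y) w = M w r * y r := by
  refine Fintype.sum_eq_single r fun t htr => ?_
  show M w t * y t = 0
  by_cases htC : t ∈ compSupp T w c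
  · rcases eq_or_ne (M w t) 0 with h | h
    · rw [h, zero_mul]
    · have hwt := (hMT w t h).resolve_left (ne_of_mem_compSupp htC).symm
      exact absurd (hT.eq_of_adj_of_mem_compSupp hr htC hwr hwt) htr
  · rw [(mem_kerOn.mp hy).1 t htC, mul_zero]

theorem exists_mulVec_apply_ne_zero_of_mem_kerOn_compSupp (hT : T.IsTree)
    (hMT : ∀ i j, M i j ≠ 0 → i = j ∨ T.Adj i j) (hMadj : ∀ i j, T.Adj i j → M i j ≠ 0)
    {y : V → R} (hy : y ∈ M.kerOn (compSupp T w c)) (hy0 : y ≠ 0) :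
    ∃ u, ∃ z ∈ M.kerOn {u}ᶜ, (M *ᵥ z) u ≠ 0 := by
  induction hn : (compSupp T w c).ncard using Nat.strong_induction_on generalizing w c y with
  | _ n ih =>
  set C := compSupp T w c
  have hsupp : ∀ t, y t ≠ 0 → t ∈ C := fun t ht => by_contra fun h => ht ((mem_kerOn.mp hy).1 t h)
  obtain ⟨t₁, ht₁⟩ := Function.ne_iff.mp hy0
  obtain ⟨r, hr, hwr⟩ := exists_adj_mem_compSupp hT.connected.preconnected (hsupp t₁ ht₁)
  by_cases hyr : y r = 0
  · have hy' : y ∈ M.kerOn (C \ {r}) := by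
      refine mem_kerOn.mpr ⟨fun t ht => ?_, fun t ht => (mem_kerOn.mp hy).2 t ht.1⟩
      by_contra h
      exact ht ⟨hsupp t h, fun htr => h (Set.mem_singleton_iff.mp htr ▸ hyr)⟩
    -- `r` is the only neighbour of `w` in `C`, so `C \ {r}` is closed in `T - r`
    have hs : ∀ t ∈ C \ {r}, ∀ t', T.Adj t t' → t' ≠ r → t' ∈ C \ {r} := by
      refine fun t ht t' htt' ht'r => ⟨mem_compSupp_of_adj ht.1 htt' fun ht'w => ?_, ht'r⟩
      exact ht.2 (hT.isAcyclic.eq_of_adj_of_mem_compSupp hr ht.1 hwr (ht'w ▸ htt'.symm))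
    obtain ⟨c', hc'C, hmem, hne⟩ :=
      exists_indicator_compSupp_mem_kerOn hMT hy' (fun h => h.2 rfl) hs (t₀ := t₁) ht₁
    refine ih _ ?_ hmem hne rfl
    calc (compSupp T r c').ncard ≤ (C \ {r}).ncard := Set.ncard_le_ncard hc'C
      _ < n := hn ▸ Set.ncard_sdiff_singleton_lt_of_mem hr
  · refine ⟨w, y, kerOn_compSupp_le hMT hy, ?_⟩
    rw [mulVec_apply_eq_of_mem_kerOn_compSupp hMT hT.isAcyclic hr hwr hy]
    exact mul_ne_zero (hMadj w r hwr) hyr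

theorem exists_finrank_kerOn_compl_singleton_eq_add_one (hT : T.IsTree) (hM : M.IsSymm)
    (hMT : ∀ i j, M i j ≠ 0 → i = j ∨ T.Adj i j) (hMadj : ∀ i j, T.Adj i j → M i j ≠ 0)
    {v : V} (hv : M.kerOn {v}ᶜ ≠ ⊥) :
    ∃ w, Module.finrank R (M.kerOn {w}ᶜ) = Module.finrank R (LinearMap.ker M.mulVecLin) + 1 := by
  obtain ⟨x, hx, hx0⟩ := Submodule.exists_mem_ne_zero_of_ne_bot hv
  obtain ⟨t₀, ht₀⟩ := Function.ne_iff.mp hx0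
  obtain ⟨c, -, hmem, hne⟩ := exists_indicator_compSupp_mem_kerOn hMT hx (fun h => h rfl)
    (fun _ _ t' _ ht' => ht') ht₀
  obtain ⟨u, y, hy, hyu⟩ := exists_mulVec_apply_ne_zero_of_mem_kerOn_compSupp hT hMT hMadj hmem hne
  exact ⟨u, hM.finrank_kerOn_compl_singleton hy hyu⟩

end Matrix

section Adjacency

open Matrix

variable {V : Type*} [Fintype V] (T : SimpleGraph V) (lam : ℝ)

theorem adjM_sub_smul_one_isSymm : (adjM T - lam • 1).IsSymm :=
  IsSymm.ext fun i j => by simp [adjM, one_apply, T.adj_comm, eq_comm]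

theorem eq_or_adj_of_adjM_sub_smul_one_ne_zero {i j : V} (h : (adjM T - lam • 1) i j ≠ 0) :
    i = j ∨ T.Adj i j := by
  by_contra! hij
  simp [adjM, one_apply, hij.1, hij.2] at h

theorem adjM_sub_smul_one_ne_zero_of_adj {i j : V} (h : T.Adj i j) :
    (adjM T - lam • 1) i j ≠ 0 := by
  simp [adjM, one_apply, h, h.ne]

theorem matMult_eq_finrank_ker {W : Type*} [Fintype W] [DecidableEq W] (A : Matrix W W ℝ) :
    matMult A lam = Module.finrank ℝ (LinearMap.ker (A - lam • 1).mulVecLin) := by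
  rw [matMult, toLin'_apply']

theorem gMult_eq_finrank_ker :
    gMult T lam = Module.finrank ℝ (LinearMap.ker (adjM T - lam • 1).mulVecLin) :=
  matMult_eq_finrank_ker lam (adjM T)

theorem sMult_eq_finrank_kerOn (s : Set V) :
    sMult T s lam = Module.finrank ℝ ((adjM T - lam • 1).kerOn s) := by
  have h : (adjM T - lam • 1).submatrix ((↑) : s → V) (↑) = adjM (T.induce s) - lam • 1 := by
    ext a b
    simp [adjM, one_apply, Subtype.ext_iff]
  rw [sMult, gMult, ← finrank_ker_submatrix_mulVecLin, h]
  -- the two sides differ only in the `DecidableEq s` instance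
  convert matMult_eq_finrank_ker lam (adjM (T.induce s))

end Adjacency

theorem stmt5_general {V : Type*} [Fintype V] (T : SimpleGraph V) (hT : T.IsTree)
    (v : V) (lam : ℝ)
    (h2 : 1 ≤ sMult T {u | u ≠ v} lam) :
    ∃ w : V, sMult T {u | u ≠ w} lam = gMult T lam + 1 := by
  have hv : (adjM T - lam • 1).kerOn {v}ᶜ ≠ ⊥ :=
    Submodule.one_le_finrank_iff.mp (sMult_eq_finrank_kerOn T lam _ ▸ h2)
  obtain ⟨w, hw⟩ := Matrix.exists_finrank_kerOn_compl_singleton_eq_add_one hT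
    (adjM_sub_smul_one_isSymm T lam) (fun _ _ => eq_or_adj_of_adjM_sub_smul_one_ne_zero T lam)
    (fun _ _ => adjM_sub_smul_one_ne_zero_of_adj T lam) hv
  exact ⟨w, by rw [sMult_eq_finrank_kerOn, gMult_eq_finrank_ker]; exact hw⟩

/-- Parter–Wiener, part (i). -/
theorem stmt5 {V : Type*} [Fintype V] (T : SimpleGraph V) (hT : T.IsTree)
    (hcard : 2 ≤ Fintype.card V) (v : V) (lam : ℝ)
    (h1 : 1 ≤ gMult T lam) (h2 : 1 ≤ sMult T {u | u ≠ v} lam) :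
    ∃ w : V, sMult T {u | u ≠ w} lam = gMult T lam + 1 :=
  stmt5_general T hT v lam h2
end

section
/- Let T be a tree with a vertex w, and suppose λ is an eigenvalue of T - w. Then m(T - w, λ) = m(T, λ) + 1 if and only if there is a connected component H of T - w such that m(H - v, λ) = m(H, λ) - 1, where v is the unique neighbor of w lying in H. -/
open scoped Classical

/-!
For a symmetric matrix `A` and a vertex set `s`, let `E(s) = eigenspaceOn A λ s` be the space
of vectors supported on `s` that satisfy `A x = λ x` at every vertex of `s`; for `A` the
adjacency matrix of `T`, its dimension is the multiplicity of `λ` in the subgraph induced on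
`s`. Pairing `x ∈ E(s \ {v})` with `y ∈ E(s)` through the symmetry of `A` gives
`(A x)_v * y_v = 0`, so `E(s)` and `E(s \ {v})` differ by at most one dimension, cut out by
`y ↦ y_v` or by `x ↦ (A x)_v`. Deleting `v` therefore raises the multiplicity by one iff some
`x ∈ E(s \ {v})` has `(A x)_v ≠ 0`, and lowers it by one iff some `y ∈ E(s)` has `y_v ≠ 0`.

Apply the first criterion to `w` in `T` and the second to `v` in a component `H` of `T - w`.
There are no edges between different components, so eigenvectors of `T - w` restrict to, and
extend from, eigenvectors of its components; and `(A x)_w` is the sum of `x` over the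
neighbours of `w`, of which a tree has exactly one in each component.
-/

open Matrix Module

theorem Submodule.finrank_inf_ker_add_one {K M : Type*} [Field K] [AddCommGroup M] [Module K M]
    [FiniteDimensional K M] (p : Submodule K M) {f : M →ₗ[K] K} (hf : ∃ x ∈ p, f x ≠ 0) :
    finrank K ↥(p ⊓ LinearMap.ker f) + 1 = finrank K p := by
  obtain ⟨x, hx, hfx⟩ := hf
  have hf' : f ∘ₗ p.subtype ≠ 0 := fun h =>
    hfx (by simpa using LinearMap.congr_fun h ⟨x, hx⟩)
  rw [← Module.Dual.finrank_ker_add_one_of_ne_zero hf', LinearMap.ker_comp,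
    ← (Submodule.comapSubtypeEquivOfLe (inf_le_left : p ⊓ LinearMap.ker f ≤ p)).finrank_eq,
    Submodule.comap_inf, Submodule.comap_subtype_self, top_inf_eq]

namespace Matrix

variable {K V : Type*} [Field K] [Fintype V]

def eigenspaceOn (A : Matrix V V K) (μ : K) (s : Set V) : Submodule K (V → K) where
  carrier := {x | (∀ u ∉ s, x u = 0) ∧ ∀ u ∈ s, (A *ᵥ x) u = μ * x u}
  add_mem' := by
    rintro x y ⟨hx, hx'⟩ ⟨hy, hy'⟩
    exact ⟨fun u hu => by simp [hx u hu, hy u hu],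
      fun u hu => by simp [mulVec_add, hx' u hu, hy' u hu, mul_add]⟩
  zero_mem' := ⟨fun _ _ => rfl, fun _ _ => by simp⟩
  smul_mem' := by
    rintro c x ⟨hx, hx'⟩
    exact ⟨fun u hu => by simp [hx u hu],
      fun u hu => by simp [mulVec_smul, hx' u hu, mul_left_comm]⟩

variable {A : Matrix V V K} {μ : K} {s t : Set V} {v : V} {x : V → K}

theorem mem_eigenspaceOn :
    x ∈ eigenspaceOn A μ s ↔ (∀ u ∉ s, x u = 0) ∧ ∀ u ∈ s, (A *ᵥ x) u = μ * x u :=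
  Iff.rfl

theorem IsSymm.mulVec_dotProduct_comm (hA : A.IsSymm) (x y : V → K) :
    A *ᵥ x ⬝ᵥ y = x ⬝ᵥ A *ᵥ y := by
  rw [dotProduct_mulVec, ← mulVec_transpose, hA.eq, dotProduct_comm]

theorem IsSymm.mulVec_apply_mul_apply_eq_zero_s7 (hA : A.IsSymm) {y : V → K}
    (hx : x ∈ eigenspaceOn A μ (s \ {v})) (hy : y ∈ eigenspaceOn A μ s) :
    (A *ᵥ x) v * y v = 0 := by
  have hleft : (A *ᵥ x - μ • x) ⬝ᵥ y = (A *ᵥ x) v * y v := by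
    rw [dotProduct, Finset.sum_eq_single v]
    · simp [hx.1 v (fun h => h.2 rfl)]
    · intro u _ huv
      by_cases hus : u ∈ s
      · simp [hx.2 u ⟨hus, huv⟩]
      · simp [hy.1 u hus]
    · simp
  have hright : x ⬝ᵥ (A *ᵥ y - μ • y) = 0 := by
    refine Finset.sum_eq_zero fun u _ => ?_
    by_cases hut : u ∈ s \ {v}
    · simp [hy.2 u hut.1]
    · simp [hx.1 u hut]
  rw [← hleft, ← hright, sub_dotProduct, dotProduct_sub, hA.mulVec_dotProduct_comm,
    smul_dotProduct, dotProduct_smul]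

theorem mem_eigenspaceOn_diff_singleton_and_mulVec_eq_zero_iff (hv : v ∈ s) :
    x ∈ eigenspaceOn A μ (s \ {v}) ∧ (A *ᵥ x) v = 0 ↔
      x ∈ eigenspaceOn A μ s ∧ x v = 0 := by
  simp only [mem_eigenspaceOn, Set.mem_sdiff, Set.mem_singleton_iff, not_and, not_not]
  constructor
  · rintro ⟨⟨hsupp, heq⟩, hAv⟩
    have hxv : x v = 0 := hsupp v fun _ => rfl
    refine ⟨⟨fun u hu => hsupp u fun h => absurd h hu, fun u hu => ?_⟩, hxv⟩
    by_cases huv : u = v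
    · simp [huv, hAv, hxv]
    · exact heq u ⟨hu, huv⟩
  · rintro ⟨⟨hsupp, heq⟩, hxv⟩
    refine ⟨⟨fun u hu => ?_, fun u hu => heq u hu.1⟩, by simp [heq v hv, hxv]⟩
    by_cases hus : u ∈ s
    · rw [hu hus, hxv]
    · exact hsupp u hus

theorem eigenspaceOn_diff_singleton_eq_inf (hv : v ∈ s)
    (h : ∀ y ∈ eigenspaceOn A μ (s \ {v}), (A *ᵥ y) v = 0) :
    eigenspaceOn A μ (s \ {v}) = eigenspaceOn A μ s ⊓ LinearMap.ker (LinearMap.proj v) := by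
  ext y
  rw [Submodule.mem_inf, LinearMap.mem_ker, LinearMap.proj_apply,
    ← mem_eigenspaceOn_diff_singleton_and_mulVec_eq_zero_iff hv]
  exact ⟨fun hy => ⟨hy, h y hy⟩, And.left⟩

theorem eigenspaceOn_eq_inf (hv : v ∈ s) (h : ∀ y ∈ eigenspaceOn A μ s, y v = 0) :
    eigenspaceOn A μ s =
      eigenspaceOn A μ (s \ {v}) ⊓ LinearMap.ker (LinearMap.proj v ∘ₗ A.mulVecLin) := by
  ext y
  rw [Submodule.mem_inf, LinearMap.mem_ker, LinearMap.comp_apply, mulVecLin_apply,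
    LinearMap.proj_apply, mem_eigenspaceOn_diff_singleton_and_mulVec_eq_zero_iff hv]
  exact ⟨fun hy => ⟨hy, h y hy⟩, And.left⟩

theorem IsSymm.finrank_eigenspaceOn_eq_add_one_iff (hA : A.IsSymm) (hv : v ∈ s) :
    finrank K (eigenspaceOn A μ s) = finrank K (eigenspaceOn A μ (s \ {v})) + 1 ↔
      ∃ x ∈ eigenspaceOn A μ s, x v ≠ 0 := by
  constructor
  · intro hdim
    by_contra! h
    have hle : eigenspaceOn A μ s ≤ eigenspaceOn A μ (s \ {v}) := by
      rw [eigenspaceOn_eq_inf hv h]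
      exact inf_le_left
    have := Submodule.finrank_mono hle
    omega
  · rintro ⟨x, hx, hxv⟩
    have h y (hy : y ∈ eigenspaceOn A μ (s \ {v})) : (A *ᵥ y) v = 0 :=
      (mul_eq_zero.mp (hA.mulVec_apply_mul_apply_eq_zero_s7 hy hx)).resolve_right hxv
    rw [eigenspaceOn_diff_singleton_eq_inf hv h,
      Submodule.finrank_inf_ker_add_one _ ⟨x, hx, hxv⟩]

theorem IsSymm.finrank_eigenspaceOn_diff_singleton_eq_add_one_iff (hA : A.IsSymm) (hv : v ∈ s) :
    finrank K (eigenspaceOn A μ (s \ {v})) = finrank K (eigenspaceOn A μ s) + 1 ↔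
      ∃ x ∈ eigenspaceOn A μ (s \ {v}), (A *ᵥ x) v ≠ 0 := by
  constructor
  · intro hdim
    by_contra! h
    have hle : eigenspaceOn A μ (s \ {v}) ≤ eigenspaceOn A μ s := by
      rw [eigenspaceOn_diff_singleton_eq_inf hv h]
      exact inf_le_left
    have := Submodule.finrank_mono hle
    omega
  · rintro ⟨x, hx, hAxv⟩
    have h y (hy : y ∈ eigenspaceOn A μ s) : y v = 0 :=
      (mul_eq_zero.mp (hA.mulVec_apply_mul_apply_eq_zero_s7 hx hy)).resolve_left hAxv
    rw [eigenspaceOn_eq_inf hv h, Submodule.finrank_inf_ker_add_one _ ⟨x, hx, hAxv⟩]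

theorem indicator_mem_eigenspaceOn (hts : t ⊆ s)
    (hblock : ∀ a ∈ t, ∀ b ∈ s \ t, A a b = 0)
    (hx : x ∈ eigenspaceOn A μ s) : t.indicator x ∈ eigenspaceOn A μ t := by
  classical
  refine ⟨fun u hu => Set.indicator_of_notMem hu x, fun a ha => ?_⟩
  have hrow : (A *ᵥ t.indicator x) a = (A *ᵥ x) a := by
    simp only [mulVec, dotProduct]
    refine Finset.sum_congr rfl fun b _ => ?_
    by_cases hbt : b ∈ t
    · simp [hbt]
    by_cases hbs : b ∈ s
    · simp [hbt, hblock a ha b ⟨hbs, hbt⟩]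
    · simp [hbt, hx.1 b hbs]
  rw [hrow, hx.2 a (hts ha), Set.indicator_of_mem ha]

theorem mem_eigenspaceOn_of_subset (hts : t ⊆ s)
    (hblock : ∀ a ∈ s \ t, ∀ b ∈ t, A a b = 0)
    (hx : x ∈ eigenspaceOn A μ t) : x ∈ eigenspaceOn A μ s := by
  refine ⟨fun u hu => hx.1 u fun h => hu (hts h), fun a ha => ?_⟩
  by_cases hat : a ∈ t
  · exact hx.2 a hat
  · rw [hx.1 a hat, mul_zero]
    refine Finset.sum_eq_zero fun b _ => ?_
    by_cases hbt : b ∈ t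
    · simp [hblock a ⟨ha, hat⟩ b hbt]
    · simp [hx.1 b hbt]

theorem submatrix_mulVec_restrict (hx : ∀ u ∉ s, x u = 0) (i : s) :
    (A.submatrix (Subtype.val : s → V) Subtype.val *ᵥ fun j : s => x j) i = (A *ᵥ x) i := by
  classical
  simp only [mulVec, dotProduct, submatrix_apply]
  rw [← Fintype.sum_subtype_add_sum_subtype (· ∈ s),
    Fintype.sum_eq_zero (fun j : {u // u ∉ s} => A i j * x j) fun j => by simp [hx j j.2],
    add_zero]

theorem finrank_eigenspaceOn (A : Matrix V V K) (μ : K) (s : Set V) :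
    finrank K (eigenspaceOn A μ s) = finrank K
      (End.eigenspace (A.submatrix (Subtype.val : s → V) Subtype.val).mulVecLin μ) := by
  classical
  let r : eigenspaceOn A μ s →ₗ[K]
      End.eigenspace (A.submatrix (Subtype.val : s → V) Subtype.val).mulVecLin μ :=
    { toFun := fun x => ⟨fun i => x.1 i, by
        rw [End.mem_eigenspace_iff, mulVecLin_apply]
        ext i
        rw [submatrix_mulVec_restrict x.2.1, x.2.2 i i.2]
        rfl⟩
      map_add' := fun _ _ => rfl
      map_smul' := fun _ _ => rfl }
  refine (LinearEquiv.ofBijective r ⟨fun x y hxy => ?_, fun y => ?_⟩).finrank_eq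
  · refine Subtype.ext (funext fun u => ?_)
    by_cases hu : u ∈ s
    · exact congrFun (congrArg Subtype.val hxy) ⟨u, hu⟩
    · rw [x.2.1 u hu, y.2.1 u hu]
  · let x : V → K := fun u => if hu : u ∈ s then y.1 ⟨u, hu⟩ else 0
    have hxs (u) (hu : u ∉ s) : x u = 0 := dif_neg hu
    have hxy : (fun i : s => x i) = y.1 := funext fun i => by simp [x]
    have hx : x ∈ eigenspaceOn A μ s := by
      refine ⟨hxs, fun u hu => ?_⟩
      have hy := congrFun (End.mem_eigenspace_iff.mp y.2) ⟨u, hu⟩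
      rw [mulVecLin_apply, ← hxy, submatrix_mulVec_restrict hxs] at hy
      simpa [x, hu] using hy
    exact ⟨⟨x, hx⟩, Subtype.ext hxy⟩

theorem eigenspaceOn_univ (A : Matrix V V K) (μ : K) :
    eigenspaceOn A μ Set.univ = End.eigenspace A.mulVecLin μ := by
  ext x
  simp [mem_eigenspaceOn, funext_iff]

end Matrix

theorem matMult_eq_finrank {V : Type*} [Fintype V] [DecidableEq V] (A : Matrix V V ℝ) (μ : ℝ) :
    matMult A μ = finrank ℝ (End.eigenspace A.mulVecLin μ) := by
  rw [matMult, End.eigenspace_def, map_sub, map_smul, toLin'_one, toLin'_apply']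
  rfl

section Adjacency

variable {V : Type*} [Fintype V] (G : SimpleGraph V)

theorem adjM_isSymm : (adjM G).IsSymm :=
  IsSymm.ext fun i j => by simp only [adjM, G.adj_comm]

variable {G} in
theorem adjM_apply_of_not_adj {a b : V} (h : ¬G.Adj a b) : adjM G a b = 0 :=
  if_neg h

theorem adjM_induce (s : Set V) :
    adjM (G.induce s) = (adjM G).submatrix Subtype.val Subtype.val := by
  ext i j
  simp [adjM]

theorem sMult_eq_finrank (s : Set V) (μ : ℝ) :
    sMult G s μ = finrank ℝ (eigenspaceOn (adjM G) μ s) := by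
  -- `gMult` picks the classical `DecidableEq ↥s`, not the one derived from `V`
  rw [sMult, gMult, @matMult_eq_finrank _ _ (_), finrank_eigenspaceOn, adjM_induce]

theorem gMult_eq_finrank (μ : ℝ) :
    gMult G μ = finrank ℝ (eigenspaceOn (adjM G) μ Set.univ) := by
  rw [gMult, matMult_eq_finrank, eigenspaceOn_univ]

end Adjacency

section Components

open SimpleGraph

variable {V : Type*} {G : SimpleGraph V} {w : V}

theorem compSupp_subset (c : (G.induce {u | u ≠ w}).ConnectedComponent) :
    compSupp G w c ⊆ {u | u ≠ w} := by
  rintro _ ⟨a, -, rfl⟩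
  exact a.2

theorem mem_compSupp_connectedComponentMk {v : V} (hv : v ≠ w) :
    v ∈ compSupp G w ((G.induce {u | u ≠ w}).connectedComponentMk ⟨v, hv⟩) :=
  ⟨⟨v, hv⟩, rfl, rfl⟩

theorem mem_compSupp_of_adj {a b : V} {c : (G.induce {u | u ≠ w}).ConnectedComponent}
    (ha : a ∈ compSupp G w c) (hb : b ≠ w) (hab : G.Adj a b) : b ∈ compSupp G w c := by
  obtain ⟨a, rfl, rfl⟩ := ha
  have hba : (G.induce {u | u ≠ w}).Adj ⟨b, hb⟩ a := by simpa using hab.symm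
  exact ⟨⟨b, hb⟩, ConnectedComponent.sound hba.reachable, rfl⟩

theorem SimpleGraph.IsAcyclic.eq_of_adj_of_mem_compSupp_s7 (hG : G.IsAcyclic) {v₁ v₂ : V}
    {c : (G.induce {u | u ≠ w}).ConnectedComponent} (h₁ : v₁ ∈ compSupp G w c)
    (h₂ : v₂ ∈ compSupp G w c) (hw₁ : G.Adj w v₁) (hw₂ : G.Adj w v₂) :
    v₁ = v₂ := by
  obtain ⟨b₁, rfl, rfl⟩ := h₁
  obtain ⟨b₂, hb₂, rfl⟩ := h₂
  obtain ⟨p⟩ := ConnectedComponent.exact hb₂.symm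
  let q : G.Path b₁ b₂ := (p.map (Embedding.induce {u | u ≠ w}).toHom).toPath
  have hwq : w ∉ (q : G.Walk b₁ b₂).support := fun hw => by
    obtain ⟨a, -, ha⟩ := List.mem_map.mp
      (Walk.support_map _ p ▸ Walk.support_toPath_subset_support _ hw)
    exact a.2 ha
  have := hG.eq_snd_of_adj_start (q.isPath.cons hwq (h := hw₁)) hw₂ (Walk.end_mem_support _)
  simpa using this.symm

variable [Fintype V] {μ : ℝ}

theorem eigenspaceOn_compSupp_le (c : (G.induce {u | u ≠ w}).ConnectedComponent) :
    eigenspaceOn (adjM G) μ (compSupp G w c) ≤ eigenspaceOn (adjM G) μ {u | u ≠ w} :=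
  fun _ => mem_eigenspaceOn_of_subset (compSupp_subset c) fun _ ha _ hb =>
    adjM_apply_of_not_adj fun hab => ha.2 (mem_compSupp_of_adj hb ha.1 hab.symm)

theorem exists_mem_compSupp_of_adjM_mulVec_ne_zero {x : V → ℝ}
    (hx : x ∈ eigenspaceOn (adjM G) μ {u | u ≠ w}) (hxw : (adjM G *ᵥ x) w ≠ 0) :
    ∃ c, ∃ v ∈ compSupp G w c, G.Adj w v ∧
      ∃ y ∈ eigenspaceOn (adjM G) μ (compSupp G w c), y v ≠ 0 := by
  obtain ⟨v, -, hv⟩ := Finset.exists_ne_zero_of_sum_ne_zero hxw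
  have hwv : G.Adj w v := by
    by_contra h
    simp [adjM_apply_of_not_adj h] at hv
  have hvc := mem_compSupp_connectedComponentMk (G := G) hwv.ne.symm
  refine ⟨_, v, hvc, hwv, _, indicator_mem_eigenspaceOn (compSupp_subset _) ?_ hx, ?_⟩
  · exact fun a ha b hb =>
      adjM_apply_of_not_adj fun hab => hb.2 (mem_compSupp_of_adj ha hb.1 hab)
  · rw [Set.indicator_of_mem hvc]
    exact right_ne_zero_of_mul hv

theorem SimpleGraph.IsAcyclic.adjM_mulVec_apply_eq (hG : G.IsAcyclic) {v : V}
    {c : (G.induce {u | u ≠ w}).ConnectedComponent} (hv : v ∈ compSupp G w c) (hwv : G.Adj w v)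
    {y : V → ℝ} (hy : ∀ u ∉ compSupp G w c, y u = 0) : (adjM G *ᵥ y) w = y v := by
  rw [mulVec, dotProduct, Finset.sum_eq_single v]
  · simp [adjM, hwv]
  · intro u _ huv
    by_cases hu : u ∈ compSupp G w c ∧ G.Adj w u
    · exact absurd (hG.eq_of_adj_of_mem_compSupp_s7 hu.1 hv hu.2 hwv) huv
    · rcases not_and_or.mp hu with hu | hu
      · simp [hy u hu]
      · simp [adjM_apply_of_not_adj hu]
  · simp

theorem SimpleGraph.IsAcyclic.exists_adjM_mulVec_ne_zero_iff (hG : G.IsAcyclic) :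
    (∃ x ∈ eigenspaceOn (adjM G) μ {u | u ≠ w}, (adjM G *ᵥ x) w ≠ 0) ↔
      ∃ c, ∃ v ∈ compSupp G w c, G.Adj w v ∧
        ∃ y ∈ eigenspaceOn (adjM G) μ (compSupp G w c), y v ≠ 0 := by
  constructor
  · rintro ⟨x, hx, hxw⟩
    exact exists_mem_compSupp_of_adjM_mulVec_ne_zero hx hxw
  · rintro ⟨c, v, hv, hwv, y, hy, hyv⟩
    exact ⟨y, eigenspaceOn_compSupp_le c hy, by rwa [hG.adjM_mulVec_apply_eq hv hwv hy.1]⟩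

end Components

theorem stmt7_general {V : Type*} [Fintype V] (T : SimpleGraph V) (hT : T.IsTree)
    (w : V) (lam : ℝ) :
    sMult T {u | u ≠ w} lam = gMult T lam + 1 ↔
      ∃ c : (T.induce {u | u ≠ w}).ConnectedComponent, ∃ v ∈ compSupp T w c,
        T.Adj w v ∧
        sMult T (compSupp T w c) lam = sMult T (compSupp T w c \ {v}) lam + 1 := by
  have hA := adjM_isSymm T
  have hdel : sMult T {u | u ≠ w} lam = gMult T lam + 1 ↔
      ∃ x ∈ eigenspaceOn (adjM T) lam {u | u ≠ w}, (adjM T *ᵥ x) w ≠ 0 := by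
    rw [sMult_eq_finrank, gMult_eq_finrank, ← Set.compl_singleton_eq, Set.compl_eq_univ_sdiff]
    exact hA.finrank_eigenspaceOn_diff_singleton_eq_add_one_iff (Set.mem_univ w)
  rw [hdel, hT.isAcyclic.exists_adjM_mulVec_ne_zero_iff]
  refine exists_congr fun c => exists_congr fun v =>
    and_congr_right fun hv => and_congr_right fun _ => ?_
  rw [sMult_eq_finrank, sMult_eq_finrank]
  exact (hA.finrank_eigenspaceOn_eq_add_one_iff hv).symm

/-- Johnson's lemma (Lemma 2.2). -/
theorem stmt7 {V : Type*} [Fintype V] (T : SimpleGraph V) (hT : T.IsTree)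
    (w : V) (lam : ℝ) (h : 1 ≤ sMult T {u | u ≠ w} lam) :
    sMult T {u | u ≠ w} lam = gMult T lam + 1 ↔
      ∃ c : (T.induce {u | u ≠ w}).ConnectedComponent, ∃ v ∈ compSupp T w c,
        T.Adj w v ∧
        sMult T (compSupp T w c) lam = sMult T (compSupp T w c \ {v}) lam + 1 :=
  stmt7_general T hT w lam
end

section
/- Let T be a tree, w a vertex of T with components T_1, ..., T_s of T - w, and λ a real number. Suppose some component T_s is a path containing λ as an eigenvalue such that λ is not an eigenvalue of T_s - u_s, where u_s is the neighbor of w in T_s. Then m(T, λ) = m(T - w, λ) - 1 = (Σ_{i=1}^s m(T_i, λ)) - 1. -/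
open scoped Classical

/-!
Let `A` be the adjacency matrix of `T` and `C` the path component of `T - w` with neighbour `u`
of `w`. A `λ`-eigenvector `z` of `C` has `z u ≠ 0`, since `λ` is not an eigenvalue of `C - u`.
Extended by zero, `z` is a `λ`-eigenvector of `T - w` with `(A z) w = z u ≠ 0`, because in a tree
`u` is the only neighbour of `w` in `C`. Pairing a `λ`-eigenvector `y` of `T` with `z` through the
symmetric `A` gives `z u * y w = 0`, so `y w = 0`; hence the `λ`-eigenspace of `T` is the kernel
of the functional `y ↦ (A y) w` on the `λ`-eigenspace of `T - w`, which is nonzero at `z`.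
The second equality holds because `A` restricted to `T - w` is block diagonal along the
components.
-/

open Module Matrix Function

theorem mem_ker_toLin'_sub_smul_one {R ι : Type*} [CommRing R] [Fintype ι] [DecidableEq ι]
    {B : Matrix ι ι R} {μ : R} {x : ι → R} :
    x ∈ LinearMap.ker (toLin' (B - μ • 1)) ↔ ∀ i, (B *ᵥ x) i = μ * x i := by
  simp [funext_iff, sub_eq_zero]

theorem mulVec_apply_eq_zero_of_forall {R m n : Type*} [NonUnitalNonAssocSemiring R] [Fintype n]
    {A : Matrix m n R} {y : n → R} {i : m} (h : ∀ j, A i j = 0 ∨ y j = 0) :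
    (A *ᵥ y) i = 0 :=
  Finset.sum_eq_zero fun j _ => by rcases h j with h | h <;> simp [h]

def Matrix.IsBlockDiagonalOn {R V ι : Type*} [Zero R] (A : Matrix V V R) (S : ι → Set V) :
    Prop :=
  Pairwise fun i j => ∀ v ∈ S i, ∀ x ∈ S j, A v x = 0

section

variable {V : Type*} [Fintype V]

/-- The `μ`-eigenspace of the principal submatrix of `A` on `s`, extended by zero to `V`. -/
def eigenspaceOn (A : Matrix V V ℝ) (s : Set V) (μ : ℝ) : Submodule ℝ (V → ℝ) where
  carrier := {y | (∀ v ∉ s, y v = 0) ∧ ∀ v ∈ s, (A *ᵥ y) v = μ * y v}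
  add_mem' := fun ⟨hx₀, hx⟩ ⟨hy₀, hy⟩ =>
    ⟨fun v hv => by simp [hx₀ v hv, hy₀ v hv],
     fun v hv => by simp [mulVec_add, hx v hv, hy v hv, mul_add]⟩
  zero_mem' := ⟨fun _ _ => rfl, fun _ _ => by simp⟩
  smul_mem' := fun c y ⟨hy₀, hy⟩ =>
    ⟨fun v hv => by simp [hy₀ v hv],
     fun v hv => by simp [mulVec_smul, hy v hv, mul_left_comm]⟩

namespace eigenspaceOn

variable {A : Matrix V V ℝ} {s t : Set V} {μ : ℝ} {y z : V → ℝ} {w : V}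

theorem mem_iff : y ∈ eigenspaceOn A s μ ↔
    (∀ v ∉ s, y v = 0) ∧ ∀ v ∈ s, (A *ᵥ y) v = μ * y v := Iff.rfl

theorem univ_eq_ker (A : Matrix V V ℝ) (μ : ℝ) :
    eigenspaceOn A Set.univ μ = LinearMap.ker (toLin' (A - μ • 1)) := by
  ext y
  rw [mem_ker_toLin'_sub_smul_one]
  simp [mem_iff]

theorem submatrix_mulVec_restrict (h : ∀ v ∉ s, y v = 0) (i : s) :
    (A.submatrix (↑) (↑) *ᵥ fun j : s => y j) i = (A *ᵥ y) i := by
  simp only [mulVec, dotProduct, submatrix_apply]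
  rw [Finset.sum_set_coe (f := fun j => A i j * y j)]
  exact Finset.sum_subset (Finset.subset_univ _) fun v _ hv => by simp [h v (by simpa using hv)]

noncomputable def restrictEquiv (A : Matrix V V ℝ) (s : Set V) [DecidableEq s] (μ : ℝ) :
    eigenspaceOn A s μ ≃ₗ[ℝ]
      LinearMap.ker (toLin' (A.submatrix ((↑) : s → V) ((↑) : s → V) - μ • 1)) where
  toFun y := ⟨fun i : s => y.1 i, mem_ker_toLin'_sub_smul_one.2 fun i => by
    obtain ⟨hy₀, hy⟩ := mem_iff.1 y.2
    rw [submatrix_mulVec_restrict hy₀, hy i i.2]⟩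
  map_add' _ _ := rfl
  map_smul' _ _ := rfl
  invFun x := ⟨fun v => if h : v ∈ s then (x : s → ℝ) ⟨v, h⟩ else 0,
    fun v hv => dif_neg hv, fun v hv => by
      have := mem_ker_toLin'_sub_smul_one.1 x.2 ⟨v, hv⟩
      rw [← submatrix_mulVec_restrict (fun v hv => dif_neg hv) ⟨v, hv⟩]
      simpa [hv] using this⟩
  left_inv y := by
    ext v
    by_cases hv : v ∈ s
    · simp [hv]
    · simp [hv, y.2.1 v hv]
  right_inv x := by ext i; simp

theorem finrank_eq_matMult (A : Matrix V V ℝ) (s : Set V) [DecidableEq s] (μ : ℝ) :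
    finrank ℝ (eigenspaceOn A s μ) =
      matMult (A.submatrix ((↑) : s → V) ((↑) : s → V)) μ :=
  (restrictEquiv A s μ).finrank_eq

theorem mono (hts : t ⊆ s) (hA : ∀ v ∈ s \ t, ∀ x ∈ t, A v x = 0) :
    eigenspaceOn A t μ ≤ eigenspaceOn A s μ := by
  rintro y ⟨hy₀, hy⟩
  refine ⟨fun v hv => hy₀ v fun hvt => hv (hts hvt), fun v hvs => ?_⟩
  by_cases hvt : v ∈ t
  · exact hy v hvt
  rw [hy₀ v hvt, mul_zero]
  exact mulVec_apply_eq_zero_of_forall fun x => (em (x ∈ t)).imp (hA v ⟨hvs, hvt⟩ x) (hy₀ x)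

theorem indicator_mem (hts : t ⊆ s) (hA : ∀ v ∈ t, ∀ x ∈ s \ t, A v x = 0)
    (hy : y ∈ eigenspaceOn A s μ) : t.indicator y ∈ eigenspaceOn A t μ := by
  refine ⟨fun v hv => Set.indicator_of_notMem hv y, fun v hvt => ?_⟩
  have hrow : (A *ᵥ (y - t.indicator y)) v = 0 := mulVec_apply_eq_zero_of_forall fun x => by
    by_cases hxt : x ∈ t
    · simp [hxt]
    by_cases hxs : x ∈ s
    · exact .inl (hA v hvt x ⟨hxs, hxt⟩)
    · simp [hxt, hy.1 x hxs]
  rw [mulVec_sub, Pi.sub_apply, sub_eq_zero] at hrow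
  rw [← hrow, hy.2 v (hts hvt), Set.indicator_of_mem hvt]

theorem diff_singleton_mem {u : V} (hy : y ∈ eigenspaceOn A s μ) (hyu : y u = 0) :
    y ∈ eigenspaceOn A (s \ {u}) μ := by
  refine ⟨fun v hv => ?_, fun v hv => hy.2 v hv.1⟩
  by_cases hvu : v = u
  · rwa [hvu]
  · exact hy.1 v fun hvs => hv ⟨hvs, hvu⟩

theorem exists_apply_ne_zero {u : V} (hs : 1 ≤ finrank ℝ (eigenspaceOn A s μ))
    (hsu : finrank ℝ (eigenspaceOn A (s \ {u}) μ) = 0) :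
    ∃ z ∈ eigenspaceOn A s μ, z u ≠ 0 := by
  have hne : eigenspaceOn A s μ ≠ ⊥ := fun h => by
    rw [h, finrank_bot] at hs
    omega
  obtain ⟨z, hz, hz₀⟩ := Submodule.exists_mem_ne_zero_of_ne_bot hne
  refine ⟨z, hz, fun hzu => hz₀ ?_⟩
  simpa [Submodule.finrank_eq_zero.1 hsu] using diff_singleton_mem hz hzu

section blocks

variable {ι : Type*} {S : ι → Set V}

theorem le_iUnion (hA : A.IsBlockDiagonalOn S) (i : ι) :
    eigenspaceOn A (S i) μ ≤ eigenspaceOn A (⋃ i, S i) μ := by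
  refine mono (Set.subset_iUnion S i) fun v ⟨hv, hvi⟩ x hx => ?_
  obtain ⟨j, hvj⟩ := Set.mem_iUnion.1 hv
  exact hA (j := i) (fun hji => hvi (hji ▸ hvj)) v hvj x hx

theorem indicator_mem_of_mem_iUnion (hA : A.IsBlockDiagonalOn S)
    (hy : y ∈ eigenspaceOn A (⋃ i, S i) μ) (i : ι) :
    (S i).indicator y ∈ eigenspaceOn A (S i) μ := by
  refine indicator_mem (Set.subset_iUnion S i) (fun v hv x ⟨hx, hxi⟩ => ?_) hy
  obtain ⟨j, hxj⟩ := Set.mem_iUnion.1 hx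
  exact hA (i := i) (fun hij => hxi (hij ▸ hxj)) v hv x hxj

variable [Fintype ι]

theorem sum_apply_eq_of_mem (hS : Pairwise (Disjoint on S)) {f : ∀ i, eigenspaceOn A (S i) μ}
    {i : ι} {v : V} (hv : v ∈ S i) :
    ∑ j, (f j : V → ℝ) v = (f i : V → ℝ) v :=
  Finset.sum_eq_single_of_mem i (Finset.mem_univ i) fun j _ hji =>
    (f j).2.1 v fun hvj => (hS hji).ne_of_mem hvj hv rfl

noncomputable def iUnionEquivPi (hS : Pairwise (Disjoint on S))
    (hA : A.IsBlockDiagonalOn S) :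
    eigenspaceOn A (⋃ i, S i) μ ≃ₗ[ℝ] ∀ i, eigenspaceOn A (S i) μ where
  toFun y i := ⟨(S i).indicator y, indicator_mem_of_mem_iUnion hA y.2 i⟩
  map_add' y y' := by ext i : 1; exact Subtype.ext (Set.indicator_add' _ _ _)
  map_smul' c y := by
    ext i : 1
    exact Subtype.ext (Set.indicator_const_smul (S i) c (y : V → ℝ))
  invFun f := ⟨∑ i, (f i : V → ℝ), Submodule.sum_mem _ fun i _ => le_iUnion hA i (f i).2⟩
  left_inv y := by
    ext v
    simp only [Finset.sum_apply]
    by_cases hv : v ∈ ⋃ i, S i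
    · obtain ⟨i, hvi⟩ := Set.mem_iUnion.1 hv
      rw [Finset.sum_eq_single_of_mem i (Finset.mem_univ i) fun j _ hji =>
        Set.indicator_of_notMem (fun hvj => (hS hji).ne_of_mem hvj hvi rfl) _]
      exact Set.indicator_of_mem hvi _
    · rw [y.2.1 v hv]
      exact Finset.sum_eq_zero fun i _ =>
        Set.indicator_of_notMem (fun hvi => hv (Set.mem_iUnion_of_mem i hvi)) _
  right_inv f := by
    ext i v
    by_cases hv : v ∈ S i
    · simp [hv, sum_apply_eq_of_mem hS hv]
    · simp [hv, (f i).2.1 v hv]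

theorem finrank_iUnion (hS : Pairwise (Disjoint on S))
    (hA : A.IsBlockDiagonalOn S) :
    finrank ℝ (eigenspaceOn A (⋃ i, S i) μ) =
      ∑ i, finrank ℝ (eigenspaceOn A (S i) μ) := by
  rw [(iUnionEquivPi hS hA).finrank_eq, finrank_pi_fintype]

end blocks

theorem mem_univ_iff (hy : y ∈ eigenspaceOn A {v | v ≠ w} μ) :
    y ∈ eigenspaceOn A Set.univ μ ↔ (A *ᵥ y) w = 0 := by
  have hyw : y w = 0 := hy.1 w (by simp)
  refine ⟨fun h => by rw [h.2 w trivial, hyw, mul_zero], fun h => ⟨by simp, fun v _ => ?_⟩⟩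
  by_cases hvw : v = w
  · rw [hvw, h, hyw, mul_zero]
  · exact hy.2 v hvw

theorem apply_eq_zero_of_mem_univ (hA : A.IsSymm) (hz : z ∈ eigenspaceOn A {v | v ≠ w} μ)
    (hzw : (A *ᵥ z) w ≠ 0) (hy : y ∈ eigenspaceOn A Set.univ μ) : y w = 0 := by
  have hAy : A *ᵥ y = μ • y := funext fun v => hy.2 v trivial
  have hAz : A *ᵥ z = μ • z + Pi.single w ((A *ᵥ z) w) := by
    ext v
    by_cases hvw : v = w
    · subst hvw; simp [hz.1 v (by simp)]
    · simp [hvw, hz.2 v hvw]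
  -- `z ⬝ᵥ A y` computed in two ways, using the symmetry of `A`.
  have key : μ * (z ⬝ᵥ y) = μ * (z ⬝ᵥ y) + (A *ᵥ z) w * y w :=
    calc μ * (z ⬝ᵥ y) = z ⬝ᵥ (A *ᵥ y) := by rw [hAy, dotProduct_smul, smul_eq_mul]
      _ = (A *ᵥ z) ⬝ᵥ y := by rw [dotProduct_mulVec, ← mulVec_transpose, hA.eq]
      _ = μ * (z ⬝ᵥ y) + (A *ᵥ z) w * y w := by
        conv_lhs => rw [hAz, add_dotProduct, smul_dotProduct, single_dotProduct, smul_eq_mul]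
  exact (mul_eq_zero.1 (by linarith)).resolve_left hzw

theorem finrank_univ_add_one (hA : A.IsSymm) (hz : z ∈ eigenspaceOn A {v | v ≠ w} μ)
    (hzw : (A *ᵥ z) w ≠ 0) :
    finrank ℝ (eigenspaceOn A Set.univ μ) + 1 =
      finrank ℝ (eigenspaceOn A {v | v ≠ w} μ) := by
  let ψ : Dual ℝ (eigenspaceOn A {v | v ≠ w} μ) :=
    (LinearMap.proj w ∘ₗ toLin' A).domRestrict _
  have hψ : ψ ≠ 0 := fun h => hzw (LinearMap.congr_fun h ⟨z, hz⟩)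
  have hle : eigenspaceOn A Set.univ μ ≤ eigenspaceOn A {v | v ≠ w} μ := fun y hy =>
    ⟨fun v hv => by rw [not_not.1 hv]; exact apply_eq_zero_of_mem_univ hA hz hzw hy,
      fun v _ => hy.2 v trivial⟩
  have hker : LinearMap.ker ψ = (eigenspaceOn A Set.univ μ).comap (Submodule.subtype _) := by
    ext y
    exact (mem_univ_iff y.2).symm
  rw [← Dual.finrank_ker_add_one_of_ne_zero hψ, hker,
    (Submodule.comapSubtypeEquivOfLe hle).finrank_eq]

end eigenspaceOn

end

namespace SimpleGraph

section compSupp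

variable {V : Type*} {G : SimpleGraph V} {w : V} {c : (G.induce {u | u ≠ w}).ConnectedComponent}

theorem pairwise_disjoint_compSupp : Pairwise (Disjoint on compSupp G w) := fun _ _ hcd =>
  (Set.disjoint_image_iff Subtype.val_injective).2 (pairwise_disjoint_supp_connectedComponent _ hcd)

theorem iUnion_compSupp : ⋃ c, compSupp G w c = {u | u ≠ w} := by
  simp [compSupp, ← Set.image_iUnion, iUnion_connectedComponentSupp]

theorem compSupp_ne {v : V} (hv : v ∈ compSupp G w c) : v ≠ w := by
  obtain ⟨v, -, rfl⟩ := hv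
  exact v.2

theorem mem_compSupp_of_adj_s12 {v x : V} (hv : v ∈ compSupp G w c) (hx : x ≠ w) (hvx : G.Adj v x) :
    x ∈ compSupp G w c := by
  obtain ⟨v, hvc, rfl⟩ := hv
  have hvx' : (G.induce {u | u ≠ w}).Adj v ⟨x, hx⟩ := hvx
  exact ⟨⟨x, hx⟩, (c.mem_supp_congr_adj hvx').1 hvc, rfl⟩

theorem IsAcyclic.eq_of_adj_of_mem_compSupp_s12 (hG : G.IsAcyclic) {a b : V}
    (ha : a ∈ compSupp G w c) (hb : b ∈ compSupp G w c) (hwa : G.Adj w a) (hwb : G.Adj w b) :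
    a = b := by
  obtain ⟨a, hac, rfl⟩ := ha
  obtain ⟨b, hbc, rfl⟩ := hb
  by_contra hab
  obtain ⟨p⟩ := ConnectedComponent.exact (hbc.trans hac.symm)
  have hwq : w ∉ (p.map (Embedding.induce _).toHom).support := by
    rw [Walk.support_map, List.mem_map]
    rintro ⟨x, -, hx⟩
    exact x.2 hx
  have hbridge := isBridge_iff_forall_walk_mem_edges.1 (isAcyclic_iff_forall_adj_isBridge.1 hG hwa)
    (Walk.cons hwb (p.map (Embedding.induce _).toHom))
  rcases List.mem_cons.1 hbridge with h | h
  · exact hab (Sym2.congr_right.1 h)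
  · exact hwq (Walk.fst_mem_support_of_mem_edges _ h)

end compSupp

variable {V : Type*} [Fintype V] (G : SimpleGraph V)

theorem isSymm_adjM : (adjM G).IsSymm := G.isSymm_adjMatrix

theorem adjM_induce (s : Set V) :
    adjM (G.induce s) = (adjM G).submatrix ((↑) : s → V) ((↑) : s → V) := rfl

theorem sMult_eq_finrank (s : Set V) (lam : ℝ) :
    sMult G s lam = finrank ℝ (eigenspaceOn (adjM G) s lam) := by
  rw [sMult, gMult, adjM_induce]
  convert (eigenspaceOn.finrank_eq_matMult (adjM G) s lam).symm

theorem gMult_eq_finrank (lam : ℝ) :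
    gMult G lam = finrank ℝ (eigenspaceOn (adjM G) Set.univ lam) := by
  rw [gMult, matMult, eigenspaceOn.univ_eq_ker]

variable {G} {w : V} {lam : ℝ}

theorem isBlockDiagonalOn_compSupp : (adjM G).IsBlockDiagonalOn (compSupp G w) :=
  fun _ _ hcd _ hv _ hx => if_neg fun hvx =>
    (pairwise_disjoint_compSupp hcd).ne_of_mem (mem_compSupp_of_adj_s12 hv (compSupp_ne hx) hvx) hx rfl

theorem eigenspaceOn_compSupp_le (c : (G.induce {u | u ≠ w}).ConnectedComponent) :
    eigenspaceOn (adjM G) (compSupp G w c) lam ≤ eigenspaceOn (adjM G) {u | u ≠ w} lam :=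
  iUnion_compSupp (G := G) ▸ eigenspaceOn.le_iUnion isBlockDiagonalOn_compSupp c

theorem finrank_eigenspaceOn_ne_eq_finsum :
    finrank ℝ (eigenspaceOn (adjM G) {u | u ≠ w} lam) =
      ∑ᶠ c, finrank ℝ (eigenspaceOn (adjM G) (compSupp G w c) lam) := by
  have := Fintype.ofFinite (G.induce {u | u ≠ w}).ConnectedComponent
  rw [finsum_eq_sum_of_fintype, ← eigenspaceOn.finrank_iUnion pairwise_disjoint_compSupp
    isBlockDiagonalOn_compSupp, iUnion_compSupp]

theorem IsAcyclic.adjM_mulVec_apply (hG : G.IsAcyclic)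
    {c : (G.induce {u | u ≠ w}).ConnectedComponent} {u : V} (hu : u ∈ compSupp G w c)
    (hwu : G.Adj w u) {z : V → ℝ}
    (hz : z ∈ eigenspaceOn (adjM G) (compSupp G w c) lam) : (adjM G *ᵥ z) w = z u := by
  rw [show adjM G = G.adjMatrix ℝ from rfl, adjMatrix_mulVec_apply]
  refine Finset.sum_eq_single_of_mem u (G.mem_neighborFinset w u |>.2 hwu) fun x hwx hxu => ?_
  exact hz.1 x fun hx =>
    hxu (hG.eq_of_adj_of_mem_compSupp_s12 hx hu ((G.mem_neighborFinset w x).1 hwx) hwu)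

end SimpleGraph

/-- Key application of Johnson's lemma: if some component of `T - w` is a path
containing `lam`, whose path minus the neighbor of `w` avoids `lam`, then
`m(T, lam) = m(T - w, lam) - 1 = (Σᵢ m(Tᵢ, lam)) - 1`. -/
theorem stmt12 {V : Type*} [Fintype V] (T : SimpleGraph V) (hT : T.IsTree)
    (w : V) (lam : ℝ)
    (hc : ∃ c : (T.induce {u | u ≠ w}).ConnectedComponent,
      IsPathGraph (T.induce (compSupp T w c)) ∧
      1 ≤ sMult T (compSupp T w c) lam ∧
      ∃ u ∈ compSupp T w c, T.Adj w u ∧ sMult T (compSupp T w c \ {u}) lam = 0) :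
    gMult T lam + 1 = sMult T {u | u ≠ w} lam ∧
    sMult T {u | u ≠ w} lam =
      ∑ᶠ c : (T.induce {u | u ≠ w}).ConnectedComponent,
        sMult T (compSupp T w c) lam := by
  obtain ⟨c, -, hm, u, hu, hwu, hm'⟩ := hc
  rw [T.sMult_eq_finrank] at hm hm'
  obtain ⟨z, hz, hzu⟩ := eigenspaceOn.exists_apply_ne_zero hm hm'
  refine ⟨?_, ?_⟩
  · rw [T.gMult_eq_finrank, T.sMult_eq_finrank]
    refine eigenspaceOn.finrank_univ_add_one T.isSymm_adjM
      (SimpleGraph.eigenspaceOn_compSupp_le c hz) ?_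
    rwa [hT.isAcyclic.adjM_mulVec_apply hu hwu hz]
  · simp only [T.sMult_eq_finrank, SimpleGraph.finrank_eigenspaceOn_ne_eq_finsum]
end

section
/- Let G be a finite simple connected graph that is not a cycle and has at least two vertices. Then for every real number λ, m(G, λ) ≤ 2c(G) + p(G) - 1, where c(G) = |E(G)| - |V(G)| + 1 is the cyclomatic number and p(G) is the number of pendant vertices. -/
open scoped Classical

/-! Every zero forcing set `S` of `G` bounds the nullity of each matrix with the off-diagonal
pattern of `G`, in particular that of `A(G) - λI`: a kernel vector vanishing on `S` vanishes on
everything `S` forces. A small zero forcing set comes from a spanning tree `T` rooted at `r`: the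
leaves of `T` together with the endpoints of the `c(G)` non-tree edges force every vertex from one
of its children, farthest from `r` first. One vertex is saved by taking `T` to avoid a cycle edge
`ab` with `deg b ≥ 3`, which exists because `G` is not a cycle: either two non-tree edges meet at
`b`, so there are at most `2c(G) - 1` endpoints, or `b` can be left out with the root at `a`.
A tree is rooted at a leaf, which is left out. -/

open Matrix

def Matrix.HasGraphPattern {V K : Type*} [Zero K] (M : Matrix V V K) (G : SimpleGraph V) : Prop :=
  ∀ u v, u ≠ v → (M u v ≠ 0 ↔ G.Adj u v)

namespace SimpleGraph

section ZeroForcing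

variable {V : Type*}

/-- The closure of `S` under the colour-change rule of zero forcing. -/
inductive ZeroForced (G : SimpleGraph V) (S : Set V) : V → Prop
  | mem {v : V} : v ∈ S → ZeroForced G S v
  | force {u v : V} : ZeroForced G S u → G.Adj u v →
      (∀ w, G.Adj u w → w ≠ v → ZeroForced G S w) → ZeroForced G S v

def IsZeroForcingSet (G : SimpleGraph V) (S : Set V) : Prop :=
  ∀ v, G.ZeroForced S v

variable [Fintype V] {K : Type*} [Field K] {G : SimpleGraph V} {S : Set V}

theorem ZeroForced.eq_zero {M : Matrix V V K} (hM : M.HasGraphPattern G) {x : V → K}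
    (hx : M *ᵥ x = 0) (hS : ∀ s ∈ S, x s = 0) {v : V} (hv : G.ZeroForced S v) : x v = 0 := by
  induction hv with
  | mem h => exact hS _ h
  | @force u v _ huv _ ihu ihw =>
    have hrow : ∑ w, M u w * x w = 0 := congrFun hx u
    rw [Finset.sum_eq_single_of_mem v (Finset.mem_univ v)] at hrow
    · exact (mul_eq_zero.1 hrow).resolve_left ((hM u v huv.ne).2 huv)
    · intro w _ hwv
      by_cases hwu : w = u
      · rw [hwu, ihu, mul_zero]
      by_cases huw : G.Adj u w
      · rw [ihw w huw hwv, mul_zero]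
      · rw [not_ne_iff.1 (mt (hM u w (Ne.symm hwu)).1 huw), zero_mul]

theorem IsZeroForcingSet.finrank_ker_le {M : Matrix V V K} (hM : M.HasGraphPattern G)
    (hS : G.IsZeroForcingSet S) :
    Module.finrank K (LinearMap.ker (Matrix.toLin' M)) ≤ S.ncard := by
  let restrict := (LinearMap.funLeft K K ((↑) : S → V)).comp
    (LinearMap.ker (Matrix.toLin' M)).subtype
  have hinj : Function.Injective restrict := by
    rw [← LinearMap.ker_eq_bot, LinearMap.ker_eq_bot']
    rintro ⟨x, hx⟩ hxS
    rw [LinearMap.mem_ker, Matrix.toLin'_apply] at hx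
    ext v
    exact (hS v).eq_zero hM hx fun s hs => congrFun hxS ⟨s, hs⟩
  calc _ ≤ Module.finrank K (S → K) := LinearMap.finrank_le_finrank_of_injective hinj
    _ = S.ncard := by
      rw [Module.finrank_fintype_fun_eq_card, Set.ncard_eq_toFinset_card', Set.toFinset_card]

theorem hasGraphPattern_adjM_sub_smul_one (G : SimpleGraph V) (lam : ℝ) :
    (adjM G - lam • (1 : Matrix V V ℝ)).HasGraphPattern G := by
  intro u v huv
  by_cases h : G.Adj u v <;> simp [adjM, huv, h]

theorem IsZeroForcingSet.gMult_le_ncard (hS : G.IsZeroForcingSet S) (lam : ℝ) :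
    gMult G lam ≤ S.ncard :=
  hS.finrank_ker_le (hasGraphPattern_adjM_sub_smul_one G lam)

end ZeroForcing

section Trees

variable {V : Type*} {T : SimpleGraph V}

theorem IsTree.eq_penultimate_of_dist_add_one_eq (hT : T.IsTree) {r y a : V} {P : T.Walk r y}
    (hP : P.IsPath) (ha : T.Adj a y) (hda : T.dist r a + 1 = T.dist r y) :
    a = P.penultimate := by
  obtain ⟨q, hq, hqlen⟩ := hT.connected.exists_path_of_dist r a
  have hyq : y ∉ q.support := fun hy => by
    have := (dist_le (q.takeUntil y hy)).trans (q.length_takeUntil_le_length hy)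
    omega
  exact hT.isAcyclic.eq_penultimate_of_adj_end hP ha.symm
    (hT.isAcyclic.mem_support_of_ne_mem_support_of_adj_of_isPath hP hq ha.symm hyq)

theorem IsTree.eq_of_dist_add_one_eq (hT : T.IsTree) {r y a b : V} (ha : T.Adj a y)
    (hb : T.Adj b y) (hda : T.dist r a + 1 = T.dist r y) (hdb : T.dist r b + 1 = T.dist r y) :
    a = b := by
  obtain ⟨P, hP⟩ := hT.connected.exists_isPath r y
  rw [hT.eq_penultimate_of_dist_add_one_eq hP ha hda,
    hT.eq_penultimate_of_dist_add_one_eq hP hb hdb]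

variable [Fintype V] [Nontrivial V]

theorem IsTree.exists_adj_dist_eq_add_one (hT : T.IsTree) (r : V) {y : V}
    (hy : y = r ∨ 2 ≤ T.degree y) : ∃ z, T.Adj y z ∧ T.dist r z = T.dist r y + 1 := by
  rcases hy with rfl | hy
  · obtain ⟨z, hz⟩ := hT.connected.preconnected.exists_adj_of_nontrivial y
    exact ⟨z, hz, by rw [dist_self, dist_eq_one_iff_adj.2 hz]⟩
  · obtain ⟨a, ha, b, hb, hab⟩ := Finset.one_lt_card.1 (T.card_neighborFinset_eq_degree y ▸ hy)
    rw [mem_neighborFinset] at ha hb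
    by_contra! hno
    have hpar : ∀ z, T.Adj y z → T.dist r z + 1 = T.dist r y := fun z hz =>
      ((hT.dist_eq_dist_add_one_of_adj r hz).resolve_right (hno z hz)).symm
    exact hab (hT.eq_of_dist_add_one_eq ha.symm hb.symm (hpar a ha) (hpar b hb))

-- Each vertex is forced by one of its children, those farthest from `r` first.
theorem IsTree.isZeroForcingSet_of_le {G : SimpleGraph V} (hT : T.IsTree) (hTG : T ≤ G) (r : V)
    {S : Set V} (hleaf : ∀ y, y ≠ r → T.degree y = 1 → y ∈ S)
    (hnontree : ∀ z w, G.Adj z w → ¬ T.Adj z w → z ≠ r → w ∈ S) : G.IsZeroForcingSet S := by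
  by_contra hS
  obtain ⟨y, hyS, hymax⟩ := Finset.exists_max_image {v | ¬ G.ZeroForced S v} (T.dist r)
    (by simpa [IsZeroForcingSet, Finset.Nonempty] using hS)
  simp only [Finset.mem_filter, Finset.mem_univ, true_and] at hyS hymax
  have hfar : ∀ u, T.dist r y < T.dist r u → G.ZeroForced S u := fun u hu => by
    by_contra h
    exact absurd (hymax u h) (not_le.2 hu)
  have hchild : y = r ∨ 2 ≤ T.degree y := by
    refine or_iff_not_imp_left.2 fun hyr => ?_
    have hpos := hT.connected.preconnected.degree_pos_of_nontrivial y
    have hne : T.degree y ≠ 1 := fun h => hyS (.mem (hleaf y hyr h))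
    omega
  obtain ⟨z, hyz, hdz⟩ := hT.exists_adj_dist_eq_add_one r hchild
  have hzr : z ≠ r := by
    rintro rfl
    simp at hdz
  refine hyS (.force (hfar z (by omega)) (hTG hyz.symm) fun w hzw hwy => ?_)
  by_cases hTzw : T.Adj z w
  · rcases hT.dist_eq_dist_add_one_of_adj r hTzw with h | h
    · exact absurd (hT.eq_of_dist_add_one_eq hTzw.symm hyz (by omega) hdz.symm) hwy
    · exact hfar w (by omega)
  · exact .mem (hnontree z w hzw hTzw hzr)

end Trees

section Cycles

variable {V W : Type*} {G : SimpleGraph V}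

theorem ncard_neighborSet_eq_degree (G : SimpleGraph V) (v : V) [Fintype (G.neighborSet v)] :
    (G.neighborSet v).ncard = G.degree v := by
  rw [Set.ncard_eq_toFinset_card', ← card_neighborSet_eq_degree, Set.toFinset_card]

theorem Preconnected.eq_univ_of_adj_closed (hG : G.Preconnected) {P : Set V} (hP : P.Nonempty)
    (hclosed : ∀ u ∈ P, ∀ v, G.Adj u v → v ∈ P) : P = Set.univ := by
  obtain ⟨u, hu⟩ := hP
  refine Set.eq_univ_of_forall fun v => by_contra fun hv => ?_
  obtain ⟨d, -, hd, hd'⟩ := (hG u v).some.exists_boundary_dart P hu hv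
  exact hd' (hclosed _ hd _ d.adj)

theorem Copy.nonempty_iso_of_ncard_neighborSet_le [Finite V] [Nonempty W] {H : SimpleGraph W}
    (f : Copy H G) (hG : G.Connected)
    (hdeg : ∀ w, (G.neighborSet (f w)).ncard ≤ (H.neighborSet w).ncard) :
    Nonempty (G ≃g H) := by
  have hnbr : ∀ w, G.neighborSet (f w) = f '' H.neighborSet w := fun w => by
    have hsub : f '' H.neighborSet w ⊆ G.neighborSet (f w) := by
      rintro _ ⟨x, hx, rfl⟩
      exact f.toHom.map_adj hx
    refine (Set.eq_of_subset_of_ncard_le hsub ?_ (Set.toFinite _)).symm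
    rw [Set.ncard_image_of_injective (f := f) _ f.injective]
    exact hdeg w
  have hsurj : Function.Surjective f := by
    refine Set.range_eq_univ.1 (hG.preconnected.eq_univ_of_adj_closed (Set.range_nonempty f) ?_)
    rintro _ ⟨w, rfl⟩ v hv
    obtain ⟨x, -, rfl⟩ := (hnbr w).subset hv
    exact Set.mem_range_self x
  refine ⟨RelIso.symm ⟨Equiv.ofBijective f ⟨f.injective, hsurj⟩, fun {a b} => ⟨fun h => ?_,
    fun h => f.toHom.map_adj h⟩⟩⟩
  obtain ⟨c, hc, hcb⟩ := (hnbr a).subset (show f b ∈ G.neighborSet (f a) from h)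
  rwa [← f.injective hcb]

theorem Walk.IsCycle.exists_adj_not_isBridge {u w : V} {c : G.Walk u u} (hc : c.IsCycle)
    (hw : w ∈ c.support) : ∃ x, G.Adj w x ∧ ¬ G.IsBridge s(w, x) := by
  have hc' := hc.rotate hw
  have hnil := hc'.not_nil
  exact ⟨_, (c.rotate w hw).adj_snd hnil,
    fun hbr => hbr.notMem_edges_of_isCycle hc' (Walk.mk_start_snd_mem_edges hnil)⟩

theorem cycleGraph.mem_support_cycle (n : ℕ) (i : Fin (n + 3)) :
    i ∈ (cycleGraph.cycle n).support := by
  rw [Walk.mem_support_iff_exists_getVert]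
  refine ⟨n + 3 - i, ?_, by simp⟩
  rw [cycleGraph.getVert_cycle (by omega)]
  ext
  simp [Nat.sub_sub_self i.isLt.le, Nat.mod_eq_of_lt i.isLt]

theorem Connected.exists_adj_not_isBridge_three_le_degree [Fintype V] (hG : G.Connected)
    (hac : ¬ G.IsAcyclic) (hnc : ¬ ∃ n : ℕ, Nonempty (G ≃g cycleGraph n)) :
    ∃ a b, G.Adj a b ∧ ¬ G.IsBridge s(a, b) ∧ 3 ≤ G.degree b := by
  by_contra! h
  obtain ⟨u, c, hc⟩ : ∃ u, ∃ c : G.Walk u u, c.IsCycle := by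
    simpa [IsAcyclic] using hac
  obtain ⟨m, hm⟩ : ∃ m, c.length = m + 3 := ⟨c.length - 3, by have := hc.three_le_length; omega⟩
  obtain ⟨f⟩ := (cycleGraph_isContained_iff (by omega)).2 ⟨u, c, hc, hm⟩
  refine hnc ⟨m + 3, f.nonempty_iso_of_ncard_neighborSet_le hG fun i => ?_⟩
  have hfc := (Walk.isCycle_map_iff_of_injective f.injective).2 (cycleGraph.isCycle_cycle (n := m))
  obtain ⟨x, hx, hbr⟩ := hfc.exists_adj_not_isBridge
    (by rw [Walk.support_map]; exact List.mem_map_of_mem (cycleGraph.mem_support_cycle m i))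
  rw [ncard_neighborSet_eq_degree, ncard_neighborSet_eq_degree, cycleGraph_degree_three_le]
  have := h x (f i) hx.symm (by rwa [Sym2.eq_swap])
  omega

end Cycles

section Counting

variable {V : Type*} [Fintype V] {G T : SimpleGraph V}

theorem pendCount_eq_ncard (G : SimpleGraph V) : pendCount G = {v | G.degree v = 1}.ncard := by
  simp only [pendCount, deg, ncard_neighborSet_eq_degree]

-- Compare the degree sum termwise with `[0 < deg v] + [2 ≤ deg v]`.
theorem ncard_support_add_ncard_two_le_degree_le (H : SimpleGraph V) [DecidableRel H.Adj] :
    H.support.ncard + {v | 2 ≤ H.degree v}.ncard ≤ 2 * H.edgeSet.ncard := by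
  have hsupp : H.support = {v | 0 < H.degree v} := by
    ext v
    exact (H.degree_pos_iff_mem_support v).symm
  rw [hsupp, Set.ncard_eq_toFinset_card', Set.ncard_eq_toFinset_card', Set.toFinset_ofPred,
    Set.toFinset_ofPred, ← coe_edgeFinset, Set.ncard_coe_finset,
    ← sum_degrees_eq_twice_card_edges, Finset.card_filter, Finset.card_filter,
    ← Finset.sum_add_distrib]
  gcongr with v
  split_ifs <;> omega

theorem IsTree.ncard_edgeSet_add_one (hT : T.IsTree) : T.edgeSet.ncard + 1 = Fintype.card V := by
  rw [← coe_edgeFinset, Set.ncard_coe_finset, hT.card_edgeFinset]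

theorem ncard_edgeSet_sdiff_add_ncard_edgeSet (hTG : T ≤ G) :
    (G \ T).edgeSet.ncard + T.edgeSet.ncard = G.edgeSet.ncard := by
  rw [edgeSet_sdiff, Set.ncard_sdiff_add_ncard_of_subset (edgeSet_mono hTG)]

theorem degree_le_degree_add_degree_sdiff (G T : SimpleGraph V) (v : V) :
    G.degree v ≤ T.degree v + (G \ T).degree v := by
  simp only [← card_neighborFinset_eq_degree]
  refine (Finset.card_le_card fun w hw => ?_).trans (Finset.card_union_le _ _)
  by_cases h : T.Adj v w <;> simp_all

theorem ncard_leaves_union_support_sdiff_le (hTG : T ≤ G) :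
    ({v | T.degree v = 1} ∪ (G \ T).support).ncard ≤ pendCount G + (G \ T).support.ncard := by
  rw [← Set.sdiff_union_self, pendCount_eq_ncard]
  refine (Set.ncard_union_le _ _).trans (Nat.add_le_add_right (Set.ncard_le_ncard ?_) _)
  rintro v ⟨hv, hvX⟩
  have hnbr : G.neighborSet v = T.neighborSet v := by
    ext w
    exact ⟨fun h => by_contra fun hT => hvX ⟨w, h, hT⟩, fun h => hTG h⟩
  simpa only [Set.mem_ofPred_eq, ← ncard_neighborSet_eq_degree, hnbr] using hv

end Counting

section Construction

variable {V : Type*} [Fintype V] [Nontrivial V] {G T : SimpleGraph V}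

theorem IsTree.exists_isZeroForcingSet (hG : G.IsTree) :
    ∃ S, G.IsZeroForcingSet S ∧ S.ncard + 1 ≤ pendCount G := by
  obtain ⟨ℓ, hℓ⟩ := hG.exists_vert_degree_one_of_nontrivial
  refine ⟨{v | G.degree v = 1} \ {ℓ}, hG.isZeroForcingSet_of_le le_rfl ℓ
    (fun y hy h => ⟨h, hy⟩) (fun _ _ h h' => absurd h h'), ?_⟩
  rw [Set.ncard_sdiff_singleton_add_one (show ℓ ∈ {v | G.degree v = 1} from hℓ),
    pendCount_eq_ncard]

theorem IsTree.exists_isZeroForcingSet_of_not_adj (hT : T.IsTree) (hTG : T ≤ G) {a b : V}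
    (hab : G.Adj a b) (hTab : ¬ T.Adj a b) (hb : 3 ≤ G.degree b) :
    ∃ S, G.IsZeroForcingSet S ∧ S.ncard + 1 ≤ pendCount G + 2 * (G \ T).edgeSet.ncard := by
  have hcount := ncard_support_add_ncard_two_le_degree_le (G \ T)
  have hLX := ncard_leaves_union_support_sdiff_le hTG
  have hnontree : ∀ z w, G.Adj z w → ¬ T.Adj z w → (G \ T).Adj w z :=
    fun z w hzw hTzw => ⟨hzw.symm, fun h => hTzw h.symm⟩
  have hba := hnontree a b hab hTab
  by_cases h2 : 2 ≤ (G \ T).degree b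
  · refine ⟨{v | T.degree v = 1} ∪ (G \ T).support, hT.isZeroForcingSet_of_le hTG b
      (fun y _ hy => Or.inl hy)
      (fun z w hzw hTzw _ => Or.inr (hnontree z w hzw hTzw).mem_support_left), ?_⟩
    have : 0 < {v | 2 ≤ (G \ T).degree v}.ncard := (Set.ncard_pos).2 ⟨b, h2⟩
    omega
  have honly : ∀ z, (G \ T).Adj b z → z = a := fun z hz =>
    Finset.card_le_one.1 (by rw [card_neighborFinset_eq_degree]; omega) z
      ((mem_neighborFinset _ _ _).2 hz) a ((mem_neighborFinset _ _ _).2 hba)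
  have hTb : 2 ≤ T.degree b := by
    have := degree_le_degree_add_degree_sdiff G T b
    omega
  refine ⟨({v | T.degree v = 1} ∪ (G \ T).support) \ {b}, hT.isZeroForcingSet_of_le hTG a
    (fun y _ hy => ⟨Or.inl hy, fun hyb => by rw [hyb] at hy; omega⟩)
    (fun z w hzw hTzw hza => ⟨Or.inr (hnontree z w hzw hTzw).mem_support_left, ?_⟩), ?_⟩
  · rintro rfl
    exact hza (honly z (hnontree z _ hzw hTzw))
  · rw [Set.ncard_sdiff_singleton_add_one (Set.mem_union_right _ hba.mem_support_left)]
    omega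

theorem Connected.exists_isZeroForcingSet (hG : G.Connected)
    (hnc : ¬ ∃ n : ℕ, Nonempty (G ≃g cycleGraph n)) :
    ∃ T ≤ G, T.IsTree ∧ ∃ S, G.IsZeroForcingSet S ∧
      S.ncard + 1 ≤ pendCount G + 2 * (G \ T).edgeSet.ncard := by
  by_cases hac : G.IsAcyclic
  · obtain ⟨S, hS, hcard⟩ := IsTree.exists_isZeroForcingSet ⟨hG, hac⟩
    exact ⟨G, le_rfl, ⟨hG, hac⟩, S, hS, by omega⟩
  obtain ⟨a, b, hab, hbr, hb⟩ := hG.exists_adj_not_isBridge_three_le_degree hac hnc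
  obtain ⟨T, hTG, hT⟩ := (hG.connected_delete_edge_of_not_isBridge hbr).exists_isTree_le
  have hTab : ¬ T.Adj a b := fun h => by simpa using hTG h
  exact ⟨T, hTG.trans (deleteEdges_le _), hT,
    hT.exists_isZeroForcingSet_of_not_adj (hTG.trans (deleteEdges_le _)) hab hTab hb⟩

end Construction

end SimpleGraph

/-- Theorem 1.1 (Wang et al.): for a connected graph `G` which is not a cycle,
`m(G, lam) ≤ 2 c(G) + p(G) - 1`. -/
theorem stmt18 {V : Type*} [Fintype V] (G : SimpleGraph V) (hconn : G.Connected)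
    (hcard : 2 ≤ Fintype.card V)
    (hnc : ¬ ∃ n : ℕ, Nonempty (G ≃g SimpleGraph.cycleGraph n)) (lam : ℝ) :
    (gMult G lam : ℤ) ≤
      2 * ((G.edgeSet.ncard : ℤ) - Fintype.card V + 1) + pendCount G - 1 := by
  have : Nontrivial V := Fintype.one_lt_card_iff_nontrivial.1 hcard
  obtain ⟨T, hTG, hT, S, hS, hSc⟩ := hconn.exists_isZeroForcingSet hnc
  have hmult := hS.gMult_le_ncard lam
  have hedges := SimpleGraph.ncard_edgeSet_sdiff_add_ncard_edgeSet hTG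
  have htree := hT.ncard_edgeSet_add_one
  omega
end
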